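/- Let U be a bounded space-time cylinder I × J. There exists C > 0 such that ‖f‖_{L^{10}(U)} ≤ C ‖f‖_{L^∞(J;L²(I))}^{4/5} ‖f‖_{L²(J;W^{2,2}(I))}^{1/5} for all f ∈ L^∞(J;L²(I)) ∩ L²(J;W^{2,2}(I)) with f(·,t) compactly supported in I for a.e. t. -/

import Mathlib

open MeasureTheory Set ENNReal NNReal

/-! Fix a time `t` and write `g = f t`, which has compact support. From `g x ^ 2 = ∫_{-∞}^x 2 g g'`
and Cauchy–Schwarz, `‖g‖_∞² ≤ 2 ‖g‖₂ ‖g'‖₂`; integrating by parts, `‖g'‖₂² ≤ ‖g‖₂ ‖g''‖₂`. Hence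
`∫ |g|^10 ≤ ‖g‖_∞^8 ‖g‖₂² ≤ 16 ‖g‖₂^8 ‖g''‖₂²`. Integrating in time and bounding `‖f t‖₂` by its
essential supremum `M` gives `‖f‖_{L^10}^10 ≤ 16 M^8 ‖f‖²_{L²(W^{2,2})}`, i.e. the claim with
`C = 2`. -/

lemma eLpNorm_natCast_pow_eq_lintegral {α ε : Type*} [MeasurableSpace α] [ENorm ε]
    {μ : Measure α} {f : α → ε} {n : ℕ} (hn : n ≠ 0) :
    eLpNorm f n μ ^ n = ∫⁻ x, ‖f x‖ₑ ^ n ∂μ := by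
  simpa using eLpNorm_nnreal_pow_eq_lintegral (μ := μ) (f := f) (p := n) (by simpa using hn)

lemma lintegral_enorm_mul_le_eLpNorm_two_mul {α 𝕜 : Type*} [MeasurableSpace α] [NormedRing 𝕜]
    {μ : Measure α} {u v : α → 𝕜} (hu : AEStronglyMeasurable u μ)
    (hv : AEStronglyMeasurable v μ) :
    ∫⁻ x, ‖u x * v x‖ₑ ∂μ ≤ eLpNorm u 2 μ * eLpNorm v 2 μ := by
  simpa [eLpNorm_one_eq_lintegral_enorm] using
    eLpNorm_le_eLpNorm_mul_eLpNorm'_of_norm (p := 2) (q := 2) (r := 1) hu hv (· * ·) 1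
      (.of_forall fun x => by simpa using norm_mul_le (u x) (v x))

section Line

variable {g g' g'' : ℝ → ℝ}

lemma sq_le_two_mul_integral_norm_mul_deriv (hg : ∀ x, HasDerivAt g (g' x) x)
    (hint : Integrable fun y => g y * g' y) (hcs : HasCompactSupport g) (x : ℝ) :
    g x ^ 2 ≤ 2 * ∫ y, ‖g y * g' y‖ := by
  have hsq : ∫ y in Iic x, 2 * (g y * g' y) = g x ^ 2 := by
    have hlim : Filter.Tendsto (fun y => g y ^ 2) Filter.atBot (nhds 0) := by
      simpa using (hcs.is_zero_at_infty.mono_left atBot_le_cocompact).pow 2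
    simpa using integral_Iic_of_hasDerivAt_of_tendsto' (a := x)
      (fun y _ => by simpa [mul_assoc] using (hg y).fun_pow 2) (hint.const_mul 2).integrableOn hlim
  calc g x ^ 2 = ∫ y in Iic x, 2 * (g y * g' y) := hsq.symm
    _ ≤ ∫ y in Iic x, ‖2 * (g y * g' y)‖ := (le_abs_self _).trans abs_integral_le_integral_abs
    _ ≤ ∫ y, ‖2 * (g y * g' y)‖ :=
      setIntegral_le_integral (hint.const_mul 2).norm (.of_forall fun _ => norm_nonneg _)
    _ = 2 * ∫ y, ‖g y * g' y‖ := by simp [norm_mul, integral_const_mul]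

lemma enorm_sq_le_two_mul_eLpNorm_mul_eLpNorm_deriv (hg : ∀ x, HasDerivAt g (g' x) x)
    (hg' : Continuous g') (hcs : HasCompactSupport g) (x : ℝ) :
    ‖g x‖ₑ ^ 2 ≤ 2 * (eLpNorm g 2 volume * eLpNorm g' 2 volume) := by
  have hgc : Continuous g := continuous_iff_continuousAt.2 fun x => (hg x).continuousAt
  have hint : Integrable fun y => g y * g' y :=
    (hgc.mul hg').integrable_of_hasCompactSupport hcs.mul_right
  calc ‖g x‖ₑ ^ 2 = ENNReal.ofReal (g x ^ 2) := by
        rw [← enorm_pow, Real.enorm_of_nonneg (sq_nonneg _)]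
    _ ≤ ENNReal.ofReal (2 * ∫ y, ‖g y * g' y‖) :=
        ENNReal.ofReal_le_ofReal (sq_le_two_mul_integral_norm_mul_deriv hg hint hcs x)
    _ = 2 * ∫⁻ y, ‖g y * g' y‖ₑ := by
        rw [ENNReal.ofReal_mul zero_le_two, ofReal_integral_norm_eq_lintegral_enorm hint]
        simp
    _ ≤ 2 * (eLpNorm g 2 volume * eLpNorm g' 2 volume) := by
        gcongr
        exact lintegral_enorm_mul_le_eLpNorm_two_mul hgc.aestronglyMeasurable
          hg'.aestronglyMeasurable

lemma eLpNorm_deriv_sq_le_eLpNorm_mul_eLpNorm_deriv_deriv (hg : ∀ x, HasDerivAt g (g' x) x)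
    (hg' : ∀ x, HasDerivAt g' (g'' x) x) (hcs : HasCompactSupport g) (hg'' : MemLp g'' 2) :
    eLpNorm g' 2 volume ^ 2 ≤ eLpNorm g 2 volume * eLpNorm g'' 2 volume := by
  have hgc : Continuous g := continuous_iff_continuousAt.2 fun x => (hg x).continuousAt
  have hg'c : Continuous g' := continuous_iff_continuousAt.2 fun x => (hg' x).continuousAt
  have hcs' : HasCompactSupport g' := by
    rw [show g' = deriv g from funext fun x => (hg x).deriv.symm]
    exact hcs.deriv
  have hint : Integrable fun x => g x * g'' x :=
    (hgc.memLp_of_hasCompactSupport (p := 2) hcs).integrable_mul hg''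
  have hint' : Integrable fun x => g' x * g' x :=
    (hg'c.mul hg'c).integrable_of_hasCompactSupport hcs'.mul_right
  have hibp : ∫ x, g x * g'' x = -∫ x, g' x * g' x :=
    integral_mul_deriv_eq_deriv_mul_of_integrable (fun x _ => hg x) (fun x _ => hg' x) hint hint'
      ((hgc.mul hg'c).integrable_of_hasCompactSupport hcs.mul_right)
  calc eLpNorm g' 2 volume ^ 2 = ∫⁻ x, ‖g' x * g' x‖ₑ := by
        simpa [sq, enorm_mul] using
          eLpNorm_natCast_pow_eq_lintegral (f := g') (μ := volume) two_ne_zero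
    _ = ENNReal.ofReal (-∫ x, g x * g'' x) := by
        rw [hibp, neg_neg, ← ofReal_integral_norm_eq_lintegral_enorm hint']
        simp [abs_mul_abs_self]
    _ ≤ ∫⁻ x, ‖g x * g'' x‖ₑ := by
        rw [← ofReal_integral_norm_eq_lintegral_enorm hint]
        exact ENNReal.ofReal_le_ofReal ((neg_le_abs _).trans abs_integral_le_integral_abs)
    _ ≤ eLpNorm g 2 volume * eLpNorm g'' 2 volume :=
        lintegral_enorm_mul_le_eLpNorm_two_mul hgc.aestronglyMeasurable hg''.1

theorem lintegral_enorm_pow_ten_le (hg : ∀ x, HasDerivAt g (g' x) x)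
    (hg' : ∀ x, HasDerivAt g' (g'' x) x) (hcs : HasCompactSupport g) :
    ∫⁻ x, ‖g x‖ₑ ^ 10 ≤ 16 * eLpNorm g 2 volume ^ 8 * eLpNorm g'' 2 volume ^ 2 := by
  set A := eLpNorm g 2 volume
  set B := eLpNorm g' 2 volume
  set D := eLpNorm g'' 2 volume
  have hgc : Continuous g := continuous_iff_continuousAt.2 fun x => (hg x).continuousAt
  have hg'c : Continuous g' := continuous_iff_continuousAt.2 fun x => (hg' x).continuousAt
  have hsup : ∀ x, ‖g x‖ₑ ^ 2 ≤ 2 * (A * B) :=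
    enorm_sq_le_two_mul_eLpNorm_mul_eLpNorm_deriv hg hg'c hcs
  by_cases hA : A = 0
  · have hzero : ∀ x, ‖g x‖ₑ = 0 := fun x => by simpa [hA] using hsup x
    simp [hzero]
  -- `g''` is only a pointwise derivative, so it may fail to be square integrable.
  by_cases hD : D = ∞
  · simp [hD, hA]
  have hg'' : MemLp g'' 2 := by
    refine ⟨?_, lt_top_iff_ne_top.2 hD⟩
    rw [show g'' = deriv g' from funext fun x => (hg' x).deriv.symm]
    exact (measurable_deriv g').aestronglyMeasurable
  have hB : B ^ 2 ≤ A * D := eLpNorm_deriv_sq_le_eLpNorm_mul_eLpNorm_deriv_deriv hg hg' hcs hg''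
  have hA2 : ∫⁻ x, ‖g x‖ₑ ^ 2 = A ^ 2 :=
    (eLpNorm_natCast_pow_eq_lintegral (f := g) (μ := volume) two_ne_zero).symm
  calc ∫⁻ x, ‖g x‖ₑ ^ 10 = ∫⁻ x, (‖g x‖ₑ ^ 2) ^ 4 * ‖g x‖ₑ ^ 2 := by
        congr 1; funext x; ring
    _ ≤ ∫⁻ x, (2 * (A * B)) ^ 4 * ‖g x‖ₑ ^ 2 := by
        gcongr with x; exact hsup x
    _ = 16 * A ^ 4 * (B ^ 2) ^ 2 * A ^ 2 := by
        rw [lintegral_const_mul _ (by fun_prop), hA2]; ring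
    _ ≤ 16 * A ^ 4 * (A * D) ^ 2 * A ^ 2 := by gcongr
    _ = 16 * A ^ 8 * D ^ 2 := by ring

theorem setLIntegral_enorm_pow_ten_le {s : Set ℝ} (hs : Bornology.IsBounded s)
    (hg : ∀ x, HasDerivAt g (g' x) x) (hg' : ∀ x, HasDerivAt g' (g'' x) x)
    (hsupp : tsupport g ⊆ s) :
    ∫⁻ x in s, ‖g x‖ₑ ^ 10 ≤
      16 * eLpNorm g 2 (volume.restrict s) ^ 8 * eLpNorm g'' 2 (volume.restrict s) ^ 2 := by
  have hcs : HasCompactSupport g :=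
    Metric.isCompact_of_isClosed_isBounded (isClosed_tsupport g) (hs.subset hsupp)
  have hg''supp : g''.support ⊆ s := by
    have hderiv : g'' = deriv (deriv g) := by
      rw [show g' = deriv g from funext fun x => (hg x).deriv.symm] at hg'
      exact funext fun x => (hg' x).deriv.symm
    rw [hderiv]
    exact subset_tsupport _ |>.trans <| tsupport_deriv_subset.trans <|
      tsupport_deriv_subset.trans hsupp
  rw [eLpNorm_restrict_eq_of_support_subset (subset_tsupport g |>.trans hsupp),
    eLpNorm_restrict_eq_of_support_subset hg''supp]
  exact (setLIntegral_le_lintegral _ _).trans (lintegral_enorm_pow_ten_le hg hg' hcs)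

end Line

section Time

variable {α : Type*} [MeasurableSpace α] {μ : Measure α}

/-- The second bound matters only when `c = ∞` and `∫⁻ s = 0`: since `s` need not be measurable,
`Φ ≤ ∞ * s` alone does not force `Φ = 0` a.e., but `Φ ^ q⁻¹ ≤ C ^ q⁻¹ * s` does. -/
theorem lintegral_le_mul_lintegral_of_ae_le {Φ s : α → ℝ≥0∞} {c C : ℝ≥0∞} {q : ℝ}
    (hΦ : AEMeasurable Φ μ) (hC : C ≠ ∞) (hq : 0 < q)
    (hc : ∀ᵐ t ∂μ, Φ t ≤ c * s t) (hCq : ∀ᵐ t ∂μ, Φ t ≤ C * s t ^ q) :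
    ∫⁻ t, Φ t ∂μ ≤ c * ∫⁻ t, s t ∂μ := by
  by_cases hcinf : c = ∞
  · by_cases hs : ∫⁻ t, s t ∂μ = 0
    · suffices h : ∫⁻ t, Φ t ∂μ = 0 by simp [h]
      have hroot : ∫⁻ t, Φ t ^ q⁻¹ ∂μ = 0 := by
        refine le_antisymm ?_ zero_le
        calc ∫⁻ t, Φ t ^ q⁻¹ ∂μ ≤ ∫⁻ t, C ^ q⁻¹ * s t ∂μ := by
              refine lintegral_mono_ae ?_
              filter_upwards [hCq] with t ht
              calc Φ t ^ q⁻¹ ≤ (C * s t ^ q) ^ q⁻¹ := by gcongr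
                _ = C ^ q⁻¹ * s t := by
                  rw [ENNReal.mul_rpow_of_nonneg _ _ (by positivity), ← ENNReal.rpow_mul,
                    mul_inv_cancel₀ hq.ne', ENNReal.rpow_one]
          _ = 0 := by
              rw [lintegral_const_mul' _ _ (ENNReal.rpow_ne_top_of_nonneg (by positivity) hC), hs,
                mul_zero]
      rw [lintegral_eq_zero_iff' hΦ]
      filter_upwards [(lintegral_eq_zero_iff' (hΦ.pow_const _)).1 hroot] with t ht
      simpa [hq, hq.not_gt] using ht
    · simp [hcinf, hs]
  · calc ∫⁻ t, Φ t ∂μ ≤ ∫⁻ t, c * s t ∂μ := lintegral_mono_ae hc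
      _ = c * ∫⁻ t, s t ∂μ := lintegral_const_mul' _ _ hcinf

theorem lintegral_le_mul_essSup_pow_mul_lintegral {Φ A B D : α → ℝ≥0∞} {K : ℝ≥0∞}
    (hK : K ≠ ∞) (hΦ : AEMeasurable Φ μ) (h : ∀ᵐ t ∂μ, Φ t ≤ K * A t ^ 8 * D t ^ 2) :
    ∫⁻ t, Φ t ∂μ ≤ K * essSup A μ ^ 8 * ∫⁻ t, (A t ^ 2 + B t ^ 2 + D t ^ 2) ∂μ := by
  have hA : ∀ t, A t ^ 2 ≤ A t ^ 2 + B t ^ 2 + D t ^ 2 := fun t => le_add_right le_self_add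
  have hD : ∀ t, D t ^ 2 ≤ A t ^ 2 + B t ^ 2 + D t ^ 2 := fun t => le_add_self
  refine lintegral_le_mul_lintegral_of_ae_le (q := 5) hΦ hK (by norm_num) ?_ ?_
  · filter_upwards [h, ae_le_essSup A] with t ht htM
    exact ht.trans (by gcongr; exact hD t)
  · filter_upwards [h] with t ht
    refine ht.trans ?_
    calc K * A t ^ 8 * D t ^ 2 = K * (A t ^ 2) ^ 4 * D t ^ 2 := by ring
      _ ≤ K * (A t ^ 2 + B t ^ 2 + D t ^ 2) ^ 4 * (A t ^ 2 + B t ^ 2 + D t ^ 2) := by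
        gcongr <;> [exact hA t; exact hD t]
      _ = K * (A t ^ 2 + B t ^ 2 + D t ^ 2) ^ (5 : ℝ) := by norm_cast; ring

end Time

theorem spacetime_L10_interpolation_general (a b t₁ t₂ : ℝ) :
    ∃ C : ℝ≥0, 0 < C ∧ ∀ (f fx fxx : ℝ → ℝ → ℝ),
      (∀ t x, HasDerivAt (f t) (fx t x) x) →
      (∀ t x, HasDerivAt (fx t) (fxx t x) x) →
      (∀ᵐ t ∂(volume.restrict (Ioo t₁ t₂)), tsupport (f t) ⊆ Ioo a b) →
      eLpNorm (fun p : ℝ × ℝ => f p.1 p.2) 10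
          ((volume.restrict (Ioo t₁ t₂)).prod (volume.restrict (Ioo a b))) ≤
        (C : ℝ≥0∞) *
          (essSup (fun t => eLpNorm (f t) 2 (volume.restrict (Ioo a b)))
              (volume.restrict (Ioo t₁ t₂))) ^ ((4:ℝ)/5) *
          ((∫⁻ t in Ioo t₁ t₂,
              (eLpNorm (f t) 2 (volume.restrict (Ioo a b)) ^ 2
                + eLpNorm (fx t) 2 (volume.restrict (Ioo a b)) ^ 2
                + eLpNorm (fxx t) 2 (volume.restrict (Ioo a b)) ^ 2)) ^ ((1:ℝ)/2)) ^ ((1:ℝ)/5) := by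
  refine ⟨2, two_pos, fun f fx fxx hf hfx hsupp => ?_⟩
  set μ := volume.restrict (Ioo t₁ t₂)
  set ν := volume.restrict (Ioo a b)
  set A := fun t => eLpNorm (f t) 2 ν
  set S := fun t => A t ^ 2 + eLpNorm (fx t) 2 ν ^ 2 + eLpNorm (fxx t) 2 ν ^ 2
  -- `f` is not assumed jointly measurable: pass to a measurable minorant of the spatial integrals.
  obtain ⟨Φ, hΦm, hΦle, hΦeq⟩ := exists_measurable_le_lintegral_eq μ
    fun t => ∫⁻ x, ‖f t x‖ₑ ^ 10 ∂ν
  have htime : ∫⁻ t, Φ t ∂μ ≤ 16 * essSup A μ ^ 8 * ∫⁻ t, S t ∂μ := by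
    refine lintegral_le_mul_essSup_pow_mul_lintegral ofNat_ne_top hΦm.aemeasurable ?_
    filter_upwards [hsupp] with t ht
    exact (hΦle t).trans (setLIntegral_enorm_pow_ten_le (Metric.isBounded_Ioo a b) (hf t) (hfx t) ht)
  rw [← ENNReal.pow_le_pow_left_iff (n := 10) (by norm_num)]
  calc eLpNorm (fun p : ℝ × ℝ => f p.1 p.2) 10 (μ.prod ν) ^ 10
      = ∫⁻ p, ‖f p.1 p.2‖ₑ ^ 10 ∂(μ.prod ν) := by
        simpa using eLpNorm_natCast_pow_eq_lintegral (μ := μ.prod ν) (n := 10) (by norm_num)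
    _ ≤ ∫⁻ t, ∫⁻ x, ‖f t x‖ₑ ^ 10 ∂ν ∂μ := lintegral_prod_le _
    _ = ∫⁻ t, Φ t ∂μ := hΦeq
    _ ≤ 2 ^ 10 * essSup A μ ^ 8 * ∫⁻ t, S t ∂μ := htime.trans (by gcongr; norm_num)
    _ = _ := by
        simp only [mul_pow, ← ENNReal.rpow_natCast, ← ENNReal.rpow_mul]
        norm_num

/-- Space-time interpolation inequality on a bounded cylinder `U = J × I`:
`‖f‖_{L^{10}(U)} ≤ C ‖f‖_{L^∞(J;L²(I))}^{4/5} ‖f‖_{L²(J;W^{2,2}(I))}^{1/5}`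
for `f(·,t)` compactly supported in `I` for a.e. `t`. Here `fx`, `fxx` are the
first and second spatial derivatives of `f`, and the `L²(J;W^{2,2}(I))` norm is
`(∫_J (‖f(t)‖_{L²}² + ‖f_x(t)‖_{L²}² + ‖f_{xx}(t)‖_{L²}²))^{1/2}`. -/
theorem spacetime_L10_interpolation (a b t₁ t₂ : ℝ) (hab : a < b) (ht : t₁ < t₂) :
    ∃ C : ℝ≥0, 0 < C ∧ ∀ (f fx fxx : ℝ → ℝ → ℝ),
      (∀ t x, HasDerivAt (f t) (fx t x) x) →
      (∀ t x, HasDerivAt (fx t) (fxx t x) x) →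
      (∀ᵐ t ∂(volume.restrict (Ioo t₁ t₂)), tsupport (f t) ⊆ Ioo a b) →
      eLpNorm (fun p : ℝ × ℝ => f p.1 p.2) 10
          ((volume.restrict (Ioo t₁ t₂)).prod (volume.restrict (Ioo a b))) ≤
        (C : ℝ≥0∞) *
          (essSup (fun t => eLpNorm (f t) 2 (volume.restrict (Ioo a b)))
              (volume.restrict (Ioo t₁ t₂))) ^ ((4:ℝ)/5) *
          ((∫⁻ t in Ioo t₁ t₂,
              (eLpNorm (f t) 2 (volume.restrict (Ioo a b)) ^ 2
                + eLpNorm (fx t) 2 (volume.restrict (Ioo a b)) ^ 2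
                + eLpNorm (fxx t) 2 (volume.restrict (Ioo a b)) ^ 2)) ^ ((1:ℝ)/2)) ^ ((1:ℝ)/5) :=
  spacetime_L10_interpolation_general a b t₁ t₂
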